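/- (Choi's theorem) A linear map φ : M_n(ℂ) → M_n(ℂ) is completely positive if and only if there exist finitely many matrices K_1, …, K_N such that φ(F) = Σ_i K_i F K_i^* for all F. -/

import Mathlib

open Matrix
open scoped ComplexOrder

/-- The extension `φ ⊗ id` of a linear map `φ : M_n(ℂ) → M_n(ℂ)` to block operators on
`ℂ^n ⊗ ℂ^m`, acting on the first tensor factor. -/
def choiExtend {n : ℕ} (φ : Matrix (Fin n) (Fin n) ℂ →ₗ[ℂ] Matrix (Fin n) (Fin n) ℂ)
    (m : ℕ) (M : Matrix (Fin n × Fin m) (Fin n × Fin m) ℂ) :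
    Matrix (Fin n × Fin m) (Fin n × Fin m) ℂ :=
  Matrix.of fun p q => φ (Matrix.of fun a b => M (a, p.2) (b, q.2)) p.1 q.1

/-- Sums of conjugations of a PSD matrix are PSD. -/
lemma psd_sum_conj {k m : Type*} [Fintype k] [Fintype m] {M : Matrix m m ℂ}
    (hM : M.PosSemidef) (L : k → Matrix m m ℂ) :
    (∑ i, L i * M * (L i)ᴴ).PosSemidef := by
  classical
  induction (Finset.univ : Finset k) using Finset.induction_on with
  | empty => simpa using Matrix.PosSemidef.zero
  | insert _ _ h ih =>
    rw [Finset.sum_insert h]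
    exact (hM.mul_mul_conjTranspose_same _).add ih

/-- Conjugation of a standard basis matrix, entrywise. -/
lemma conj_std {n : ℕ} (A : Matrix (Fin n) (Fin n) ℂ) (k l i j : Fin n) :
    (A * Matrix.single k l (1 : ℂ) * Aᴴ) i j = A i k * star (A j l) := by
  simp only [Matrix.mul_apply, Matrix.single, Matrix.conjTranspose_apply,
    Matrix.of_apply, ite_and, mul_ite, ite_mul, mul_one, mul_zero, zero_mul,
    Finset.sum_ite_eq, Finset.sum_ite_eq', Finset.mem_univ, if_true]

/-- Expand a conjugation `A F Aᴴ` over the standard basis of `F`. -/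
lemma conj_expand {n : ℕ} (A F : Matrix (Fin n) (Fin n) ℂ) :
    A * F * Aᴴ = ∑ k, ∑ l, F k l • (A * Matrix.single k l (1 : ℂ) * Aᴴ) := by
  conv_lhs => rw [Matrix.matrix_eq_sum_single F]
  rw [Matrix.mul_sum, Matrix.sum_mul]
  refine Finset.sum_congr rfl fun k _ => ?_
  rw [Matrix.mul_sum, Matrix.sum_mul]
  refine Finset.sum_congr rfl fun l _ => ?_
  have h : Matrix.single k l (F k l) = F k l • Matrix.single k l (1 : ℂ) := by
    rw [Matrix.smul_single, smul_eq_mul, mul_one]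
  rw [h, mul_smul_comm, smul_mul_assoc]

/-- Entrywise identity relating conjugation by `A` on a block slice with conjugation by
`A ⊗ 1` on the full block matrix. -/
lemma mpr_entry {n m : ℕ} (A : Matrix (Fin n) (Fin n) ℂ)
    (M : Matrix (Fin n × Fin m) (Fin n × Fin m) ℂ) (p1 q1 : Fin n) (p2 q2 : Fin m) :
    (A * (Matrix.of fun a b => M (a, p2) (b, q2)) * Aᴴ) p1 q1 =
      ((Matrix.of fun p q : Fin n × Fin m => A p.1 q.1 * (if p.2 = q.2 then (1:ℂ) else 0)) * M *
        (Matrix.of fun p q : Fin n × Fin m => A p.1 q.1 * (if p.2 = q.2 then (1:ℂ) else 0))ᴴ)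
        (p1, p2) (q1, q2) := by
  simp only [Matrix.mul_apply, Matrix.conjTranspose_apply, Matrix.of_apply,
    Fintype.sum_prod_type, mul_ite, ite_mul, mul_one, mul_zero, zero_mul, one_mul,
    apply_ite (star : ℂ → ℂ), star_one, star_zero, star_mul', Finset.sum_ite_eq,
    Finset.sum_ite_eq', Finset.mem_univ, if_true, Finset.sum_ite_irrel, Finset.sum_const_zero]

/-- Choi's theorem: `φ : M_n(ℂ) → M_n(ℂ)` is completely positive iff there are finitely many
matrices `K_i` with `φ(F) = Σ_i K_i F K_i^*` for all `F`. -/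
theorem stmt_4 (n : ℕ) (φ : Matrix (Fin n) (Fin n) ℂ →ₗ[ℂ] Matrix (Fin n) (Fin n) ℂ) :
    (∀ (m : ℕ) (M : Matrix (Fin n × Fin m) (Fin n × Fin m) ℂ),
        M.PosSemidef → (choiExtend φ m M).PosSemidef) ↔
      ∃ (N : ℕ) (K : Fin N → Matrix (Fin n) (Fin n) ℂ),
        ∀ F : Matrix (Fin n) (Fin n) ℂ, φ F = ∑ i, K i * F * (K i)ᴴ := by
  constructor
  · intro hCP
    -- the maximally entangled state
    set v : Fin n × Fin n → ℂ := fun p => if p.1 = p.2 then 1 else 0 with hv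
    set Ω : Matrix (Fin n × Fin n) (Fin n × Fin n) ℂ :=
      Matrix.of fun p q => v p * v q with hΩ
    have hvr : ∀ r, star (v r) = v r := by
      intro r; simp only [hv]; split <;> simp
    have hΩpsd : Ω.PosSemidef := by
      refine Matrix.PosSemidef.of_dotProduct_mulVec_nonneg ?_ ?_
      · ext p q
        simp only [hΩ, Matrix.conjTranspose_apply, Matrix.of_apply, star_mul', hvr]
        ring
      · intro x
        have key : star x ⬝ᵥ Ω *ᵥ x
            = star (∑ q, v q * x q) * (∑ q, v q * x q) := by
          simp only [hΩ, dotProduct, Matrix.mulVec, dotProduct, Matrix.of_apply,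
            Pi.star_apply, star_sum, star_mul', hvr]
          rw [Finset.sum_mul]
          refine Finset.sum_congr rfl fun p _ => ?_
          rw [Finset.mul_sum, Finset.mul_sum]
          refine Finset.sum_congr rfl fun q _ => ?_
          ring
        rw [key]
        exact star_mul_self_nonneg _
    have hC : (choiExtend φ n Ω).PosSemidef := hCP n Ω hΩpsd
    open scoped MatrixOrder in
    obtain ⟨B, hB⟩ := CStarAlgebra.nonneg_iff_eq_star_mul_self.mp hC.nonneg
    rw [Matrix.star_eq_conjTranspose] at hB
    -- the Kraus operators
    set K : Fin n × Fin n → Matrix (Fin n) (Fin n) ℂ :=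
      fun r => Matrix.of fun i k => star (B r (i, k)) with hK
    -- key identity on basis matrices
    have key : ∀ k l : Fin n, φ (Matrix.single k l (1 : ℂ)) =
        ∑ r : Fin n × Fin n, K r * Matrix.single k l (1 : ℂ) * (K r)ᴴ := by
      intro k l
      ext i j
      have h1 : φ (Matrix.single k l (1 : ℂ)) i j = choiExtend φ n Ω (i, k) (j, l) := by
        have hslice : (Matrix.of fun a b => Ω (a, k) (b, l)) = Matrix.single k l (1 : ℂ) := by
          ext a b
          simp only [Matrix.of_apply, hΩ, hv, Matrix.single, ite_and]
          by_cases h1 : a = k <;> by_cases h2 : b = l <;> simp [h1, h2, eq_comm] <;> aesop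
        simp only [choiExtend, Matrix.of_apply, hslice]
      rw [h1, hB, Matrix.sum_apply]
      simp only [conj_std]
      simp [hK, Matrix.mul_apply, Matrix.conjTranspose_apply]
    have main : ∀ F, φ F = ∑ r : Fin n × Fin n, K r * F * (K r)ᴴ := by
      intro F
      conv_lhs => rw [Matrix.matrix_eq_sum_single F]
      rw [map_sum]
      calc (∑ k, φ (∑ l, Matrix.single k l (F k l)))
          = ∑ k, ∑ l, ∑ r : Fin n × Fin n,
              F k l • (K r * Matrix.single k l (1 : ℂ) * (K r)ᴴ) := by
            refine Finset.sum_congr rfl fun k _ => ?_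
            rw [map_sum]
            refine Finset.sum_congr rfl fun l _ => ?_
            have h : Matrix.single k l (F k l)
                = F k l • Matrix.single k l (1 : ℂ) := by
              rw [Matrix.smul_single, smul_eq_mul, mul_one]
            rw [h, LinearMap.map_smul, key, Finset.smul_sum]
        _ = ∑ k, ∑ r : Fin n × Fin n, ∑ l,
              F k l • (K r * Matrix.single k l (1 : ℂ) * (K r)ᴴ) :=
            Finset.sum_congr rfl fun k _ => Finset.sum_comm
        _ = ∑ r : Fin n × Fin n, ∑ k, ∑ l,
              F k l • (K r * Matrix.single k l (1 : ℂ) * (K r)ᴴ) :=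
            Finset.sum_comm
        _ = ∑ r : Fin n × Fin n, K r * F * (K r)ᴴ :=
            Finset.sum_congr rfl fun r _ => (conj_expand (K r) F).symm
    refine ⟨n * n, fun i => K (finProdFinEquiv.symm i), fun F => ?_⟩
    rw [main F, ← Equiv.sum_comp finProdFinEquiv.symm (fun r => K r * F * (K r)ᴴ)]
  · rintro ⟨N, K, hK⟩ m M hM
    set L : Fin N → Matrix (Fin n × Fin m) (Fin n × Fin m) ℂ :=
      fun i => Matrix.of fun p q => K i p.1 q.1 * (if p.2 = q.2 then (1:ℂ) else 0) with hL
    have hEq : choiExtend φ m M = ∑ i, L i * M * (L i)ᴴ := by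
      ext p q
      obtain ⟨p1, p2⟩ := p
      obtain ⟨q1, q2⟩ := q
      show φ (Matrix.of fun a b => M (a, p2) (b, q2)) p1 q1 = _
      rw [hK, Matrix.sum_apply, Matrix.sum_apply]
      exact Finset.sum_congr rfl fun i _ => mpr_entry (K i) M p1 q1 p2 q2
    rw [hEq]
    exact psd_sum_conj hM _
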